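/- arXiv:1206.6146 — 9 statements merged into one kernel-verified Lean document; each statement's English description precedes it below -/
import Mathlib

section
/- Let X be a real Banach space, let {(x_j, f_j)}_{j∈ℕ} be a Schauder frame of X, and let S : X → X* be a bounded linear operator with S(x_j) = f_j for all j (so S is a Hilbert-Schauder frame operator). Then S is self-adjoint, i.e., (S x)(y) = (S y)(x) for all x, y ∈ X. -/
/-! Applying `S · w` to the frame expansion of `v` gives `S v w = ∑ⱼ fⱼ(v) fⱼ(w)`, a series that is
symmetric in `v` and `w`. -/

open Filter Topology

/-- A Schauder frame of a real Banach space `X`: for every `v ∈ X`, the partial sums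
`∑_{j < N} f j (v) • x j` converge to `v` in norm. -/
def SchauderFrame {X : Type*} [NormedAddCommGroup X] [NormedSpace ℝ X]
    (x : ℕ → X) (f : ℕ → X →L[ℝ] ℝ) : Prop :=
  ∀ v : X, Tendsto (fun N => ∑ j ∈ Finset.range N, f j v • x j) atTop (𝓝 v)

theorem SchauderFrame.tendsto_sum_smul_map {X E : Type*} [NormedAddCommGroup X]
    [NormedSpace ℝ X] [NormedAddCommGroup E] [NormedSpace ℝ E] {x : ℕ → X} {f : ℕ → X →L[ℝ] ℝ}
    (hframe : SchauderFrame x f) (T : X →L[ℝ] E) (v : X) :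
    Tendsto (fun N => ∑ j ∈ Finset.range N, f j v • T (x j)) atTop (𝓝 (T v)) := by
  simpa only [Function.comp_def, map_sum, map_smul] using (T.continuous.tendsto v).comp (hframe v)

theorem SchauderFrame.tendsto_sum_mul_apply {X : Type*} [NormedAddCommGroup X]
    [NormedSpace ℝ X] {x : ℕ → X} {f : ℕ → X →L[ℝ] ℝ} (hframe : SchauderFrame x f)
    (B : X →L[ℝ] X →L[ℝ] ℝ) (v w : X) :
    Tendsto (fun N => ∑ j ∈ Finset.range N, f j v * B (x j) w) atTop (𝓝 (B v w)) :=
  hframe.tendsto_sum_smul_map ((ContinuousLinearMap.apply ℝ ℝ w).comp B) v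

theorem hsf_operator_self_adjoint_general
    {X : Type*} [NormedAddCommGroup X] [NormedSpace ℝ X]
    (x : ℕ → X) (f : ℕ → X →L[ℝ] ℝ) (hframe : SchauderFrame x f)
    (S : X →L[ℝ] X →L[ℝ] ℝ) (hS : ∀ j, S (x j) = f j) :
    ∀ v w : X, S v w = S w v := by
  intro v w
  have hvw := hframe.tendsto_sum_mul_apply S v w
  have hwv := hframe.tendsto_sum_mul_apply S w v
  simp only [hS] at hvw hwv
  simp only [mul_comm (f _ w)] at hwv
  exact tendsto_nhds_unique hvw hwv

/-- Every Hilbert-Schauder frame operator is self-adjoint. -/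
theorem hsf_operator_self_adjoint
    {X : Type*} [NormedAddCommGroup X] [NormedSpace ℝ X] [CompleteSpace X]
    (x : ℕ → X) (f : ℕ → X →L[ℝ] ℝ) (hframe : SchauderFrame x f)
    (S : X →L[ℝ] X →L[ℝ] ℝ) (hS : ∀ j, S (x j) = f j) :
    ∀ v w : X, S v w = S w v :=
  hsf_operator_self_adjoint_general x f hframe S hS
end

section
/- Let X be a real Banach space, let {(x_j, f_j)}_{j∈ℕ} be a Schauder frame of X, and let S : X → X* be a bounded linear operator with S(x_j) = f_j for all j. Then S is injective. -/
open Filter Topology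

/-!
If `S (x j) = f j`, then applying the continuous bilinear form `(w, v) ↦ S w v` to the frame
expansion of `v` gives `S v v = ∑ⱼ (f j v)²`. So `S v = 0` forces every coefficient `f j v` to
vanish, and then `v`, the limit of its expansion, is `0`.
-/

namespace SchauderFrame

variable {X : Type*} [NormedAddCommGroup X] [NormedSpace ℝ X] {x : ℕ → X} {f : ℕ → X →L[ℝ] ℝ}

theorem eq_zero_of_forall_apply_eq_zero (hframe : SchauderFrame x f) {v : X}
    (hv : ∀ j, f j v = 0) : v = 0 := by
  have hexpansion_zero : (fun N => ∑ j ∈ Finset.range N, f j v • x j) = fun _ => 0 := by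
    simp only [hv, zero_smul, Finset.sum_const_zero]
  have := hframe v
  rw [hexpansion_zero] at this
  exact tendsto_nhds_unique this tendsto_const_nhds

theorem hasSum_sq_apply (hframe : SchauderFrame x f) {S : X →L[ℝ] X →L[ℝ] ℝ}
    (hS : ∀ j, S (x j) = f j) (v : X) : HasSum (fun j => f j v ^ 2) (S v v) := by
  rw [hasSum_iff_tendsto_nat_of_nonneg (fun j => sq_nonneg _)]
  have hpartial : ∀ N, S (∑ j ∈ Finset.range N, f j v • x j) v
      = ∑ j ∈ Finset.range N, f j v ^ 2 := fun N => by
    simp only [map_sum, map_smul, hS, sum_apply, smul_apply, smul_eq_mul, sq]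
  have hcont : Continuous fun w => S w v := (S.flip v).continuous
  exact ((hcont.tendsto v).comp (hframe v)).congr hpartial

end SchauderFrame

theorem hsf_operator_injective_general
    {X : Type*} [NormedAddCommGroup X] [NormedSpace ℝ X]
    (x : ℕ → X) (f : ℕ → X →L[ℝ] ℝ) (hframe : SchauderFrame x f)
    (S : X →L[ℝ] X →L[ℝ] ℝ) (hS : ∀ j, S (x j) = f j) :
    Function.Injective S := by
  refine (injective_iff_map_eq_zero S).2 fun v hv => hframe.eq_zero_of_forall_apply_eq_zero ?_
  have hsum : HasSum (fun j => f j v ^ 2) 0 := by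
    simpa [hv] using hframe.hasSum_sq_apply hS v
  have hsq : (fun j => f j v ^ 2) = 0 := (hasSum_zero_iff_of_nonneg fun j => sq_nonneg _).1 hsum
  exact fun j => pow_eq_zero_iff two_ne_zero |>.1 (congrFun hsq j)

/-- Every Hilbert-Schauder frame operator is injective. -/
theorem hsf_operator_injective
    {X : Type*} [NormedAddCommGroup X] [NormedSpace ℝ X] [CompleteSpace X]
    (x : ℕ → X) (f : ℕ → X →L[ℝ] ℝ) (hframe : SchauderFrame x f)
    (S : X →L[ℝ] X →L[ℝ] ℝ) (hS : ∀ j, S (x j) = f j) :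
    Function.Injective S :=
  hsf_operator_injective_general x f hframe S hS
end

section
/- Let X be a real Banach space and let {(x_j, f_j)}_{j∈ℕ} be a Hilbert-Schauder frame of X with Hilbert-Schauder frame operator S. Then Σ_{j∈ℕ} |f_j(x)|² ≤ ‖S‖ · ‖x‖² for all x ∈ X (in particular the series on the left converges). -/
/-! Applying the continuous functional `u ↦ S u v` to the frame expansion `v = ∑ⱼ fⱼ(v) xⱼ`
gives `S v v = ∑ⱼ fⱼ(v)²` (the partial sums are monotone, so their limit is the sum), and
`S v v ≤ ‖S‖ ‖v‖²`. -/

open Filter Topology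

theorem ContinuousLinearMap.apply_self_le_opNorm_mul_sq {E : Type*} [SeminormedAddCommGroup E]
    [NormedSpace ℝ E] (B : E →L[ℝ] E →L[ℝ] ℝ) (v : E) : B v v ≤ ‖B‖ * ‖v‖ ^ 2 :=
  calc B v v ≤ ‖B v v‖ := le_abs_self _
    _ ≤ ‖B‖ * ‖v‖ * ‖v‖ := B.le_opNorm₂ v v
    _ = ‖B‖ * ‖v‖ ^ 2 := by ring

theorem SchauderFrame.hasSum_sq {X : Type*} [NormedAddCommGroup X] [NormedSpace ℝ X]
    {x : ℕ → X} {f : ℕ → X →L[ℝ] ℝ} (hframe : SchauderFrame x f)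
    {S : X →L[ℝ] X →L[ℝ] ℝ} (hS : ∀ j, S (x j) = f j) (v : X) :
    HasSum (fun j => f j v ^ 2) (S v v) := by
  rw [hasSum_iff_tendsto_nat_of_nonneg fun j => sq_nonneg _]
  have hpair : ∀ N, S.flip v (∑ j ∈ Finset.range N, f j v • x j) =
      ∑ j ∈ Finset.range N, f j v ^ 2 := fun N => by
    simp only [map_sum, map_smul, ContinuousLinearMap.flip_apply, hS, smul_eq_mul, sq]
  simpa only [Function.comp_def, hpair, ContinuousLinearMap.flip_apply] using
    ((S.flip v).continuous.tendsto v).comp (hframe v)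

theorem hsf_frame_upper_bound_general
    {X : Type*} [NormedAddCommGroup X] [NormedSpace ℝ X]
    (x : ℕ → X) (f : ℕ → X →L[ℝ] ℝ) (hframe : SchauderFrame x f)
    (S : X →L[ℝ] X →L[ℝ] ℝ) (hS : ∀ j, S (x j) = f j) :
    ∀ v : X, Summable (fun j => |f j v| ^ 2) ∧
      ∑' j, |f j v| ^ 2 ≤ ‖S‖ * ‖v‖ ^ 2 := by
  intro v
  have hsum : HasSum (fun j => |f j v| ^ 2) (S v v) := by
    simpa only [sq_abs] using hframe.hasSum_sq hS v
  exact ⟨hsum.summable, hsum.tsum_eq ▸ S.apply_self_le_opNorm_mul_sq v⟩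

/-- For a Hilbert-Schauder frame with HSf-operator `S`,
`∑ⱼ |fⱼ(x)|² ≤ ‖S‖ ‖x‖²` for all `x` (in particular the series converges). -/
theorem hsf_frame_upper_bound
    {X : Type*} [NormedAddCommGroup X] [NormedSpace ℝ X] [CompleteSpace X]
    (x : ℕ → X) (f : ℕ → X →L[ℝ] ℝ) (hframe : SchauderFrame x f)
    (S : X →L[ℝ] X →L[ℝ] ℝ) (hS : ∀ j, S (x j) = f j) :
    ∀ v : X, Summable (fun j => |f j v| ^ 2) ∧
      ∑' j, |f j v| ^ 2 ≤ ‖S‖ * ‖v‖ ^ 2 :=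
  hsf_frame_upper_bound_general x f hframe S hS
end

section
/- Let X be a real Banach space. Suppose {(x_j, f_{1,j})}_{j∈ℕ} and {(x_j, f_{2,j})}_{j∈ℕ} (with the same first components x_j) are both Hilbert-Schauder frames of X, with Hilbert-Schauder frame operators S₁ and S₂ respectively. Then S₁ = S₂ and f_{1,j} = f_{2,j} for all j ∈ ℕ. -/
/-! Expanding `v` in one frame and `w` in the other computes the same series
`∑ⱼ f₂ⱼ(v) f₁ⱼ(w)` as `S₁ v w` and as `S₂ w v`, so `S₁ v w = S₂ w v`. Taking both frames equal to
the second one shows that `S₂` is symmetric, hence `S₁ = S₂`, and then `f₁ⱼ = S₁ xⱼ = S₂ xⱼ = f₂ⱼ`. -/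

open Filter Topology

namespace SchauderFrame

variable {X : Type*} [NormedAddCommGroup X] [NormedSpace ℝ X]
  {x : ℕ → X} {f g : ℕ → X →L[ℝ] ℝ} {S T : X →L[ℝ] X →L[ℝ] ℝ}

theorem tendsto_sum_mul_apply_s6 (hg : SchauderFrame x g) (hS : ∀ j, S (x j) = f j) (v w : X) :
    Tendsto (fun N => ∑ j ∈ Finset.range N, g j v * f j w) atTop (𝓝 (S v w)) := by
  have h := ((S.flip w).continuous.tendsto v).comp (hg v)
  simpa [Function.comp_def, map_sum, hS] using h

theorem apply_apply_eq_apply_swap (hf : SchauderFrame x f) (hg : SchauderFrame x g)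
    (hS : ∀ j, S (x j) = f j) (hT : ∀ j, T (x j) = g j) (v w : X) : S v w = T w v := by
  refine tendsto_nhds_unique (hg.tendsto_sum_mul_apply_s6 hS v w) ?_
  simpa only [mul_comm] using hf.tendsto_sum_mul_apply_s6 hT w v

end SchauderFrame

theorem hsf_frame_unique_functionals_general
    {X : Type*} [NormedAddCommGroup X] [NormedSpace ℝ X]
    (x : ℕ → X) (f₁ f₂ : ℕ → X →L[ℝ] ℝ)
    (hframe₁ : SchauderFrame x f₁) (hframe₂ : SchauderFrame x f₂)
    (S₁ S₂ : X →L[ℝ] X →L[ℝ] ℝ)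
    (hS₁ : ∀ j, S₁ (x j) = f₁ j) (hS₂ : ∀ j, S₂ (x j) = f₂ j) :
    S₁ = S₂ ∧ ∀ j, f₁ j = f₂ j := by
  have hS : S₁ = S₂ := by
    ext v w
    rw [hframe₁.apply_apply_eq_apply_swap hframe₂ hS₁ hS₂ v w,
      hframe₂.apply_apply_eq_apply_swap hframe₂ hS₂ hS₂ w v]
  exact ⟨hS, fun j => by rw [← hS₁ j, ← hS₂ j, hS]⟩

/-- If two Hilbert-Schauder frames share the same vectors `xⱼ`, then their
HSf-operators coincide and the functionals coincide. -/
theorem hsf_frame_unique_functionals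
    {X : Type*} [NormedAddCommGroup X] [NormedSpace ℝ X] [CompleteSpace X]
    (x : ℕ → X) (f₁ f₂ : ℕ → X →L[ℝ] ℝ)
    (hframe₁ : SchauderFrame x f₁) (hframe₂ : SchauderFrame x f₂)
    (S₁ S₂ : X →L[ℝ] X →L[ℝ] ℝ)
    (hS₁ : ∀ j, S₁ (x j) = f₁ j) (hS₂ : ∀ j, S₂ (x j) = f₂ j) :
    S₁ = S₂ ∧ ∀ j, f₁ j = f₂ j :=
  hsf_frame_unique_functionals_general x f₁ f₂ hframe₁ hframe₂ S₁ S₂ hS₁ hS₂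
end

section
/- Let X be a real Banach space and let {(x_n, f_n)}_{n∈ℕ} be a Hilbert-Schauder frame of X with Hilbert-Schauder frame operator S. Then for every n ∈ ℕ, the partial sums Σ_{j≤N} f_n(x_j) f_j converge in the norm of X* to f_n, i.e., f_n = Σ_j f_n(x_j) f_j. -/
open Filter Topology

/-! An HSf-operator `S` is symmetric, since `S u v = ∑ⱼ fⱼ(u) fⱼ(v)`. Hence
`fₙ(xⱼ) = S xₙ xⱼ = S xⱼ xₙ = fⱼ(xₙ)`, and applying `S` to the expansion `xₙ = ∑ⱼ fⱼ(xₙ) xⱼ`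
gives `fₙ = ∑ⱼ fₙ(xⱼ) fⱼ`. -/

namespace SchauderFrame

variable {X : Type*} [NormedAddCommGroup X] [NormedSpace ℝ X] {x : ℕ → X} {f : ℕ → X →L[ℝ] ℝ}

theorem tendsto_sum_smul_map_s8 {E : Type*} [TopologicalSpace E] [AddCommMonoid E] [Module ℝ E]
    (h : SchauderFrame x f) (T : X →L[ℝ] E) (v : X) :
    Tendsto (fun N => ∑ j ∈ Finset.range N, f j v • T (x j)) atTop (𝓝 (T v)) := by
  simpa only [Function.comp_def, map_sum, map_smul] using (T.continuous.tendsto v).comp (h v)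

variable {S : X →L[ℝ] X →L[ℝ] ℝ}

theorem tendsto_sum_mul (h : SchauderFrame x f) (hS : ∀ j, S (x j) = f j) (u v : X) :
    Tendsto (fun N => ∑ j ∈ Finset.range N, f j u * f j v) atTop (𝓝 (S u v)) := by
  simpa only [ContinuousLinearMap.flip_apply, hS, smul_eq_mul] using
    h.tendsto_sum_smul_map_s8 (S.flip v) u

theorem apply_apply_comm (h : SchauderFrame x f) (hS : ∀ j, S (x j) = f j) (u v : X) :
    S u v = S v u := by
  have hvu := h.tendsto_sum_mul hS v u
  simp_rw [mul_comm (f _ v)] at hvu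
  exact tendsto_nhds_unique (h.tendsto_sum_mul hS u v) hvu

end SchauderFrame

theorem hsf_frame_functional_reconstruction_general
    {X : Type*} [NormedAddCommGroup X] [NormedSpace ℝ X]
    (x : ℕ → X) (f : ℕ → X →L[ℝ] ℝ) (hframe : SchauderFrame x f)
    (S : X →L[ℝ] X →L[ℝ] ℝ) (hS : ∀ j, S (x j) = f j) :
    ∀ n : ℕ, Tendsto (fun N => ∑ j ∈ Finset.range N, f n (x j) • f j)
      atTop (𝓝 (f n)) := by
  intro n
  have hcoeff : ∀ j, f j (x n) = f n (x j) := fun j => by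
    rw [← hS n, ← hS j, hframe.apply_apply_comm hS]
  simpa only [hS, hcoeff] using hframe.tendsto_sum_smul_map_s8 S (x n)

/-- For a Hilbert-Schauder frame, each functional `fₙ` is reconstructed by the frame:
the partial sums `∑_{j<N} fₙ(xⱼ) fⱼ` converge to `fₙ` in the norm of `X*`. -/
theorem hsf_frame_functional_reconstruction
    {X : Type*} [NormedAddCommGroup X] [NormedSpace ℝ X] [CompleteSpace X]
    (x : ℕ → X) (f : ℕ → X →L[ℝ] ℝ) (hframe : SchauderFrame x f)
    (S : X →L[ℝ] X →L[ℝ] ℝ) (hS : ∀ j, S (x j) = f j) :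
    ∀ n : ℕ, Tendsto (fun N => ∑ j ∈ Finset.range N, f n (x j) • f j)
      atTop (𝓝 (f n)) :=
  hsf_frame_functional_reconstruction_general x f hframe S hS
end

section
/- With (x_n, f_n) ∈ ℓ₁ × ℓ∞ defined by x_{2n-1} = x_{2n} = e_n for all n ≥ 1, f₁ = 𝟏, f₂ = e₁* − 𝟏, f_{2k−1} = e_k* − e₁*/2^k and f_{2k} = e₁*/2^k for k ≥ 2 (where 𝟏 = (1,1,1,…) ∈ ℓ∞), the partial sums Σ_{j=1}^{N} 𝟏(x_j) f_j do NOT converge in the norm of ℓ∞ to 𝟏 (where 𝟏(x_j) = Σ_k (x_j)_k). Consequently {(f_n, x_n)} is not a Schauder frame of the norm-closed linear span of {f_n : n ∈ ℕ}, even though 𝟏 = f₁ belongs to that span. -/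
open Filter Topology

/-- The constant-one sequence `𝟏 = (1,1,1,…)` as an element of `ℓ∞(ℕ, ℝ)`. -/
noncomputable def oneInf : lp (fun _ : ℕ => ℝ) ⊤ :=
  ⟨fun _ => (1 : ℝ), memℓp_infty ⟨1, by rintro r ⟨i, rfl⟩; simp⟩⟩

/-- The vectors of the example: `x₍₂ₙ₋₁₎ = x₍₂ₙ₎ = eₙ` for `n ≥ 1` (paper index `n`
corresponds to the coordinate `n - 1` of `ℓ₁`); index `0` is unused and set to `0`. -/
noncomputable def xSeq : ℕ → lp (fun _ : ℕ => ℝ) 1 := fun n =>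
  if n = 0 then 0 else lp.single 1 ((n + 1) / 2 - 1) 1

/-- The functionals of the example: `f₁ = 𝟏`, `f₂ = e₁* − 𝟏`,
`f₍₂ₖ₋₁₎ = eₖ* − e₁*/2ᵏ` and `f₍₂ₖ₎ = e₁*/2ᵏ` for `k ≥ 2` (the paper coordinate `k`
corresponds to the coordinate `k - 1` of `ℓ∞`); index `0` is unused and set to `0`. -/
noncomputable def fSeq : ℕ → lp (fun _ : ℕ => ℝ) ⊤ := fun n =>
  if n = 0 then 0
  else if n = 1 then oneInf
  else if n = 2 then lp.single ⊤ 0 1 - oneInf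
  else if n % 2 = 1 then
    lp.single ⊤ ((n + 1) / 2 - 1) 1 - ((2 : ℝ) ^ ((n + 1) / 2))⁻¹ • lp.single ⊤ 0 1
  else ((2 : ℝ) ^ (n / 2))⁻¹ • lp.single ⊤ 0 1

/-!
Every `xⱼ` is a unit vector, so `𝟏(xⱼ) = 1` and the `N`-th partial sum is just `f₁ + ⋯ + f_N`.
Since `f₁ + f₂ = e₁*` and each later `fⱼ` lives on the coordinates `1` and `⌈j/2⌉`, this sum
vanishes at every coordinate beyond `N`, where `𝟏` equals `1`; so it stays at distance at
least `1` from `𝟏`.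
-/

lemma oneInf_apply (k : ℕ) : oneInf k = 1 := rfl

lemma tsum_xSeq_mul_oneInf {j : ℕ} (hj : j ≠ 0) : ∑' k : ℕ, xSeq j k * oneInf k = 1 := by
  simp only [xSeq, if_neg hj, oneInf_apply, mul_one]
  rw [tsum_eq_single ((j + 1) / 2 - 1) fun k hk => lp.single_apply_ne _ _ _ hk]
  exact lp.single_apply_self _ _ _

lemma fSeq_one_add_fSeq_two : fSeq 1 + fSeq 2 = lp.single ⊤ 0 1 := by
  simp [fSeq]

lemma fSeq_apply_eq_zero {j m : ℕ} (hj : 3 ≤ j) (hm₀ : m ≠ 0) (hm : m ≠ (j + 1) / 2 - 1) :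
    fSeq j m = 0 := by
  simp only [fSeq, if_neg (show j ≠ 0 by omega), if_neg (show j ≠ 1 by omega),
    if_neg (show j ≠ 2 by omega)]
  split_ifs
  · rw [lp.coeFn_sub, Pi.sub_apply, lp.coeFn_smul, Pi.smul_apply, lp.single_apply_ne _ _ _ hm,
      lp.single_apply_ne _ _ _ hm₀, smul_zero, sub_zero]
  · rw [lp.coeFn_smul, Pi.smul_apply, lp.single_apply_ne _ _ _ hm₀, smul_zero]

lemma sum_fSeq_apply_eq_zero {N m : ℕ} (hN : 2 ≤ N) (hm : N < m) :
    (∑ j ∈ Finset.Icc 1 N, fSeq j) m = 0 := by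
  induction N, hN using Nat.le_induction generalizing m with
  | base =>
    rw [show Finset.Icc 1 2 = {1, 2} by decide, Finset.sum_pair (by decide),
      fSeq_one_add_fSeq_two, lp.single_apply_ne _ _ _ (by omega)]
  | succ N hN ih =>
    rw [Finset.sum_Icc_succ_top (by omega), lp.coeFn_add, Pi.add_apply, ih (by omega),
      fSeq_apply_eq_zero (by omega) (by omega) (by omega), add_zero]

lemma one_le_norm_sum_fSeq_sub_oneInf {N : ℕ} (hN : 2 ≤ N) :
    1 ≤ ‖∑ j ∈ Finset.Icc 1 N, fSeq j - oneInf‖ := by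
  have h := lp.norm_apply_le_norm ENNReal.top_ne_zero (∑ j ∈ Finset.Icc 1 N, fSeq j - oneInf)
    (N + 1)
  rwa [lp.coeFn_sub, Pi.sub_apply, sum_fSeq_apply_eq_zero hN N.lt_succ_self, oneInf_apply,
    zero_sub, norm_neg, norm_one] at h

lemma not_tendsto_sum_fSeq_oneInf :
    ¬ Tendsto (fun N => ∑ j ∈ Finset.Icc 1 N, fSeq j) atTop (𝓝 oneInf) := by
  intro h
  have hsmall : ∀ᶠ N in atTop, ‖∑ j ∈ Finset.Icc 1 N, fSeq j - oneInf‖ < 1 :=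
    (tendsto_iff_norm_sub_tendsto_zero.1 h).eventually_lt_const one_pos
  obtain ⟨N, hlt, hN⟩ := (hsmall.and (eventually_ge_atTop 2)).exists
  exact (one_le_norm_sum_fSeq_sub_oneInf hN).not_gt hlt

lemma sum_tsum_xSeq_mul_oneInf_smul (N : ℕ) :
    ∑ j ∈ Finset.Icc 1 N, (∑' k : ℕ, xSeq j k * oneInf k) • fSeq j =
      ∑ j ∈ Finset.Icc 1 N, fSeq j :=
  Finset.sum_congr rfl fun j hj => by
    rw [tsum_xSeq_mul_oneInf (by simp at hj; omega), one_smul]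

/-- For the example system `{(xₙ, fₙ)}` of `ℓ₁ × ℓ∞`, the partial sums
`∑_{j=1}^N 𝟏(xⱼ) fⱼ` do not converge in the norm of `ℓ∞` to `𝟏` (here
`𝟏(xⱼ) = ∑ₖ (xⱼ)ₖ = ∑ₖ (xⱼ)ₖ · 𝟏ₖ`).  Consequently `{(fₙ, xₙ)}` is not a Schauder
frame of the norm-closed linear span of `{fₙ}`, even though `𝟏 = f₁` lies in it. -/
theorem example_swap_not_frame :
    (¬ Tendsto (fun N => ∑ j ∈ Finset.Icc 1 N, (∑' k : ℕ, xSeq j k * oneInf k) • fSeq j)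
        atTop (𝓝 oneInf)) ∧
    oneInf ∈ (Submodule.span ℝ (Set.range fSeq)).topologicalClosure ∧
    ¬ (∀ g : lp (fun _ : ℕ => ℝ) ⊤,
        g ∈ (Submodule.span ℝ (Set.range fSeq)).topologicalClosure →
        Tendsto (fun N => ∑ j ∈ Finset.Icc 1 N, (∑' k : ℕ, xSeq j k * g k) • fSeq j)
          atTop (𝓝 g)) := by
  have hnot : ¬ Tendsto (fun N => ∑ j ∈ Finset.Icc 1 N,
      (∑' k : ℕ, xSeq j k * oneInf k) • fSeq j) atTop (𝓝 oneInf) := by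
    simpa only [sum_tsum_xSeq_mul_oneInf_smul] using not_tendsto_sum_fSeq_oneInf
  have hmem : oneInf ∈ (Submodule.span ℝ (Set.range fSeq)).topologicalClosure :=
    Submodule.le_topologicalClosure _ (Submodule.subset_span ⟨1, by simp [fSeq]⟩)
  exact ⟨hnot, hmem, fun h => hnot (h oneInf hmem)⟩
end

section
/- Let 1 ≤ p ≤ 2 and let q be the conjugate exponent, 1/p + 1/q = 1 (q = ∞ when p = 1). Then the map S : ℓ_p(ℕ, ℝ) → (ℓ_p(ℕ, ℝ))* defined by (S x)(y) = Σ_n x_n y_n for x, y ∈ ℓ_p is a well-defined bounded linear operator with ‖S‖ = 1, and S(e_n) = e_n* for every n, where (e_n) is the unit vector basis of ℓ_p and (e_n*) are the coordinate functionals. Consequently the unit vector basis {(e_n, e_n*)} is an unconditional Hilbert-Schauder basis of ℓ_p. -/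
/-!
For `p ≤ r` the inclusion `ℓ_p ⊆ ℓ_r` is a contraction, because `‖x_i‖^r ≤ ‖x_i‖^p ‖x‖_p^(r-p)`.
Hence for `p ≤ 2` the pairing `S` is the inner product of `ℓ_2` restricted to `ℓ_p`, and
Cauchy–Schwarz gives `‖S‖ ≤ 1`, while `S e₀ e₀ = 1` gives `‖S‖ ≥ 1`. Since `p < ∞`, the unit
vectors form a Schauder basis of `ℓ_p`.
-/

open scoped ENNReal

namespace lp

section Inclusion

variable {α : Type*} {E : α → Type*} [∀ i, NormedAddCommGroup (E i)] {p q : ℝ≥0∞}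

theorem norm_inclusion_le (hp : p ≠ 0) (hpq : p ≤ q) (f : lp E p) :
    ‖AddSubgroup.inclusion (lp.monotone hpq) f‖ ≤ ‖f‖ := by
  have hf_le (i : α) : ‖f i‖ ≤ ‖f‖ := norm_apply_le_norm hp f i
  rcases eq_or_ne q ⊤ with rfl | hq
  · exact norm_le_of_forall_le (norm_nonneg' f) hf_le
  have hp_pos : 0 < p.toReal := ENNReal.toReal_pos hp (ne_top_of_le_ne_top hq hpq)
  have hpq' : p.toReal ≤ q.toReal := ENNReal.toReal_mono hq hpq
  refine norm_le_of_forall_sum_le (hp_pos.trans_le hpq') (norm_nonneg' f) fun s => ?_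
  have split (x : ℝ) (hx : 0 ≤ x) : x ^ q.toReal = x ^ p.toReal * x ^ (q.toReal - p.toReal) := by
    rw [← Real.rpow_add_of_nonneg hx hp_pos.le (sub_nonneg.2 hpq'), add_sub_cancel]
  calc ∑ i ∈ s, ‖f i‖ ^ q.toReal
      ≤ ∑ i ∈ s, ‖f i‖ ^ p.toReal * ‖f‖ ^ (q.toReal - p.toReal) := by
        gcongr with i
        rw [split _ (norm_nonneg _)]
        gcongr
        exact hf_le i
    _ ≤ ‖f‖ ^ p.toReal * ‖f‖ ^ (q.toReal - p.toReal) := by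
        rw [← Finset.sum_mul]
        exact mul_le_mul_of_nonneg_right (sum_rpow_le_norm_rpow hp_pos f s)
          (Real.rpow_nonneg (norm_nonneg' f) _)
    _ = ‖f‖ ^ q.toReal := (split _ (norm_nonneg' f)).symm

variable (𝕜 : Type*) [NormedField 𝕜] [∀ i, NormedSpace 𝕜 (E i)] [Fact (1 ≤ p)] [Fact (1 ≤ q)]

noncomputable def inclusionCLM (hpq : p ≤ q) : lp E p →L[𝕜] lp E q :=
  (linearMapOfLE 𝕜 E hpq).mkContinuous 1 fun f => by
    rw [one_mul]; exact norm_inclusion_le (zero_lt_one.trans_le Fact.out).ne' hpq f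

@[simp]
theorem coe_inclusionCLM_apply (hpq : p ≤ q) (f : lp E p) : ⇑(inclusionCLM 𝕜 hpq f) = f := rfl

theorem norm_inclusionCLM_apply_le (hpq : p ≤ q) (f : lp E p) : ‖inclusionCLM 𝕜 hpq f‖ ≤ ‖f‖ :=
  norm_inclusion_le (zero_lt_one.trans_le Fact.out).ne' hpq f

end Inclusion

section RealPairing

variable {α : Type*} {p : ℝ≥0∞} [Fact (1 ≤ p)]

noncomputable def realPairing (hp : p ≤ 2) :
    lp (fun _ : α => ℝ) p →L[ℝ] lp (fun _ : α => ℝ) p →L[ℝ] ℝ :=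
  (innerSL ℝ).bilinearComp (inclusionCLM ℝ hp) (inclusionCLM ℝ hp)

variable (hp : p ≤ 2)

theorem realPairing_apply (x y : lp (fun _ : α => ℝ) p) :
    realPairing hp x y = ∑' i, x i * y i := by
  simp [realPairing, lp.inner_eq_tsum, mul_comm]

theorem norm_realPairing_le : ‖realPairing (α := α) hp‖ ≤ 1 := by
  refine ContinuousLinearMap.opNorm_le_bound₂ _ zero_le_one fun x y => ?_
  rw [one_mul]
  calc ‖realPairing hp x y‖ ≤ ‖inclusionCLM ℝ hp x‖ * ‖inclusionCLM ℝ hp y‖ :=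
        norm_inner_le_norm (𝕜 := ℝ) (inclusionCLM ℝ hp x) (inclusionCLM ℝ hp y)
    _ ≤ ‖x‖ * ‖y‖ := by
        gcongr <;> exact norm_inclusionCLM_apply_le ℝ hp _

theorem realPairing_single_one [DecidableEq α] (i : α) (y : lp (fun _ : α => ℝ) p) :
    realPairing hp (lp.single p i 1) y = y i := by
  simp [realPairing_apply, lp.single_apply, Pi.single_apply]

theorem norm_realPairing [Nonempty α] : ‖realPairing (α := α) hp‖ = 1 := by
  classical
  inhabit α
  set e := lp.single (E := fun _ : α => ℝ) p default 1
  have he : ‖e‖ = 1 := by simp [e, lp.norm_single (zero_lt_one.trans_le Fact.out)]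
  refine le_antisymm (norm_realPairing_le hp) ?_
  simpa [he, e, realPairing_single_one] using (realPairing hp).le_opNorm₂ e e

end RealPairing

theorem hasSum_smul_single_one {α 𝕜 : Type*} [NormedRing 𝕜] [DecidableEq α] {p : ℝ≥0∞}
    [Fact (1 ≤ p)] (hp : p ≠ ⊤) (v : lp (fun _ : α => 𝕜) p) :
    HasSum (fun i => v i • lp.single p i (1 : 𝕜)) v := by
  simpa only [← lp.single_smul, smul_eq_mul, mul_one] using lp.hasSum_single hp v

end lp

/-- For `1 ≤ p ≤ 2`, the natural pairing `(S x)(y) = ∑ₙ xₙ yₙ` defines a bounded linear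
operator `S : ℓ_p → (ℓ_p)*` of norm `1` sending each unit vector `eₙ` to the coordinate
functional `eₙ*`; consequently the unit vector basis `{(eₙ, eₙ*)}` is an unconditional
Hilbert-Schauder basis of `ℓ_p`.  (The hypothesis `1 ≤ p` is provided as a `Fact`.) -/
theorem unit_basis_lp_is_HS_basis (p : ℝ≥0∞) [hp1 : Fact (1 ≤ p)] (hp2 : p ≤ 2) :
    ∃ S : lp (fun _ : ℕ => ℝ) p →L[ℝ] (lp (fun _ : ℕ => ℝ) p →L[ℝ] ℝ),
      (∀ x y : lp (fun _ : ℕ => ℝ) p, S x y = ∑' n : ℕ, x n * y n) ∧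
      ‖S‖ = 1 ∧
      (∀ (n : ℕ) (y : lp (fun _ : ℕ => ℝ) p), S (lp.single p n 1) y = y n) ∧
      ∀ v : lp (fun _ : ℕ => ℝ) p,
        HasSum (fun n : ℕ => v n • lp.single p n (1 : ℝ)) v :=
  ⟨lp.realPairing hp2, lp.realPairing_apply hp2, lp.norm_realPairing hp2,
    lp.realPairing_single_one hp2,
    lp.hasSum_smul_single_one (ne_top_of_le_ne_top ENNReal.ofNat_ne_top hp2)⟩
end

section
/- Let X be a real Banach space and let {(x_n, f_n)}_{n∈ℕ} be a Hilbert-Schauder frame of X with Hilbert-Schauder frame operator S. Then there exists K > 0 such that every f ∈ X* with ‖f‖ ≤ K lies in the weak-* closure of the set {S x : x ∈ X, ‖S x‖ ≤ 1}; that is, K·B_{X*} ⊆ weak-*-closure of (B_{X*} ∩ S(X)). -/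
/-
The partial-sum operators `P_N v = ∑_{j<N} f_j(v) x_j` converge pointwise to the identity, so by
uniform boundedness `‖P_N‖ ≤ C` for all `N`. For `g ∈ X*`, the functionals `g ∘ P_N` converge
weak-* to `g`, and `g ∘ P_N = ∑_{j<N} g(x_j) f_j = S (∑_{j<N} g(x_j) x_j)` lies in the range of `S`.
Hence `K = C⁻¹` works: if `‖g‖ ≤ C⁻¹` then `‖g ∘ P_N‖ ≤ 1`.
-/

open Filter Topology

namespace SchauderFrame

variable {X : Type*} [NormedAddCommGroup X] [NormedSpace ℝ X]

noncomputable def partialSum (x : ℕ → X) (f : ℕ → X →L[ℝ] ℝ) (N : ℕ) : X →L[ℝ] X :=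
  ∑ j ∈ Finset.range N, (f j).smulRight (x j)

theorem partialSum_apply (x : ℕ → X) (f : ℕ → X →L[ℝ] ℝ) (N : ℕ) (v : X) :
    partialSum x f N v = ∑ j ∈ Finset.range N, f j v • x j := by
  simp [partialSum]

theorem tendsto_partialSum {x : ℕ → X} {f : ℕ → X →L[ℝ] ℝ} (hframe : SchauderFrame x f) (v : X) :
    Tendsto (fun N => partialSum x f N v) atTop (𝓝 v) := by
  simpa only [partialSum_apply] using hframe v

theorem exists_pos_norm_partialSum_le [CompleteSpace X] {x : ℕ → X} {f : ℕ → X →L[ℝ] ℝ}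
    (hframe : SchauderFrame x f) : ∃ C : ℝ, 0 < C ∧ ∀ N, ‖partialSum x f N‖ ≤ C := by
  have hbdd : ∀ v, ∃ C, ∀ N, ‖partialSum x f N v‖ ≤ C := fun v => by
    obtain ⟨C, hC⟩ := (hframe.tendsto_partialSum v).norm.bddAbove_range
    exact ⟨C, fun N => hC ⟨N, rfl⟩⟩
  obtain ⟨C, hC⟩ := banach_steinhaus hbdd
  exact ⟨max C 1, by positivity, fun N => (hC N).trans (le_max_left C 1)⟩

theorem tendsto_toWeakDual_comp_partialSum {x : ℕ → X} {f : ℕ → X →L[ℝ] ℝ}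
    (hframe : SchauderFrame x f) (g : X →L[ℝ] ℝ) :
    Tendsto (fun N => StrongDual.toWeakDual (g.comp (partialSum x f N))) atTop
      (𝓝 (StrongDual.toWeakDual g)) := by
  rw [tendsto_iff_forall_eval_tendsto_topDualPairing]
  exact fun v => (g.continuous.tendsto v).comp (hframe.tendsto_partialSum v)

theorem comp_partialSum_eq_apply {x : ℕ → X} {f : ℕ → X →L[ℝ] ℝ} {S : X →L[ℝ] X →L[ℝ] ℝ}
    (hS : ∀ j, S (x j) = f j) (g : X →L[ℝ] ℝ) (N : ℕ) :
    g.comp (partialSum x f N) = S (∑ j ∈ Finset.range N, g (x j) • x j) := by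
  ext v
  simp [partialSum_apply, hS, mul_comm]

end SchauderFrame

open SchauderFrame in
/-- For a Hilbert-Schauder frame with HSf-operator `S`, there is `K > 0` such that
`K · B_{X*}` is contained in the weak-* closure of `B_{X*} ∩ S(X)`. -/
theorem hsf_ball_in_weakstar_closure
    {X : Type*} [NormedAddCommGroup X] [NormedSpace ℝ X] [CompleteSpace X]
    (x : ℕ → X) (f : ℕ → X →L[ℝ] ℝ) (hframe : SchauderFrame x f)
    (S : X →L[ℝ] X →L[ℝ] ℝ) (hS : ∀ j, S (x j) = f j) :
    ∃ K : ℝ, 0 < K ∧ ∀ g : X →L[ℝ] ℝ, ‖g‖ ≤ K →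
      StrongDual.toWeakDual g ∈
        closure (StrongDual.toWeakDual ''
          {h : X →L[ℝ] ℝ | ‖h‖ ≤ 1 ∧ ∃ v : X, S v = h}) := by
  obtain ⟨C, hC0, hC⟩ := hframe.exists_pos_norm_partialSum_le
  refine ⟨C⁻¹, inv_pos.2 hC0, fun g hg => ?_⟩
  have hnorm (N : ℕ) : ‖g.comp (partialSum x f N)‖ ≤ 1 :=
    calc ‖g.comp (partialSum x f N)‖ ≤ ‖g‖ * ‖partialSum x f N‖ := g.opNorm_comp_le _
      _ ≤ C⁻¹ * C := mul_le_mul hg (hC N) (norm_nonneg _) (inv_nonneg.2 hC0.le)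
      _ = 1 := inv_mul_cancel₀ hC0.ne'
  exact mem_closure_of_tendsto (hframe.tendsto_toWeakDual_comp_partialSum g)
    (Eventually.of_forall fun N => ⟨g.comp (partialSum x f N),
      ⟨hnorm N, _, (comp_partialSum_eq_apply hS g N).symm⟩, rfl⟩)
end

section
/- Let X be a real Banach space, let {(x_n, f_n)}_{n∈ℕ} be a Hilbert-Schauder frame of X with Hilbert-Schauder frame operator S, let Y be the norm-closed linear span of {S x_n : n ∈ ℕ} in X*, and suppose T : Y → Y* is a bounded linear operator such that {(S x_n, T(S x_n))}_{n∈ℕ} is a Schauder frame of Y (i.e., for every f ∈ Y, the partial sums Σ_{n≤N} (T(S x_n))(f) · S x_n converge to f in norm). Then (T S x)(f) = f(x) for every x ∈ X and every f ∈ Y. -/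
open Filter Topology

/-- The norm-closed linear span in `X*` of the range of a sequence of functionals. -/
noncomputable def closedSpan {X : Type*} [NormedAddCommGroup X] [NormedSpace ℝ X]
    (F : ℕ → X →L[ℝ] ℝ) : Submodule ℝ (X →L[ℝ] ℝ) :=
  (Submodule.span ℝ (Set.range F)).topologicalClosure

/-- Port helper: the (strong) topology on the dual of a submodule of `X*`. In current Mathlib
instance search no longer finds it by itself (the `AddCommMonoid` of the submodule is not
unified with `AddCommGroup.toAddCommMonoid`); this is the same instance, made explicit. -/
noncomputable instance dualSubmoduleTopology {X : Type*} [NormedAddCommGroup X]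
    [NormedSpace ℝ X] (p : Submodule ℝ (X →L[ℝ] ℝ)) : TopologicalSpace (p →L[ℝ] ℝ) :=
  let _ : AddCommGroup p := inferInstance
  inferInstance

/-
Expand `v = ∑ fⱼ(v) xⱼ` and push it through `S`: the partial sums `∑ fⱼ(v) S xⱼ` lie in `Y` and
converge to `S v`, so `(T S v)(h) = ∑ fⱼ(v) (T S xⱼ)(h)`. Expanding `h = ∑ (T S xⱼ)(h) S xⱼ` in `Y`
instead and evaluating at `v` gives `h(v) = ∑ (T S xⱼ)(h) fⱼ(v)`, the same series.
-/

theorem ContinuousLinearMap.tendsto_sum_smul_map {R E F : Type*} [Semiring R]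
    [TopologicalSpace E] [AddCommMonoid E] [Module R E]
    [TopologicalSpace F] [AddCommMonoid F] [Module R F]
    (L : E →L[R] F) {c : ℕ → R} {e : ℕ → E} {y : E}
    (h : Tendsto (fun N => ∑ j ∈ Finset.range N, c j • e j) atTop (𝓝 y)) :
    Tendsto (fun N => ∑ j ∈ Finset.range N, c j • L (e j)) atTop (𝓝 (L y)) := by
  simpa only [Function.comp_def, map_sum, map_smul] using (L.continuous.tendsto y).comp h

theorem Submodule.tendsto_sum_smul_of_tendsto_coe {R E : Type*} [Semiring R]
    [TopologicalSpace E] [AddCommMonoid E] [Module R E] {p : Submodule R E}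
    {c : ℕ → R} {e : ℕ → p} {w : p}
    (h : Tendsto (fun N => ∑ j ∈ Finset.range N, c j • (e j : E)) atTop (𝓝 (w : E))) :
    Tendsto (fun N => ∑ j ∈ Finset.range N, c j • e j) atTop (𝓝 w) := by
  rw [Topology.IsEmbedding.subtypeVal.tendsto_nhds_iff]
  simpa only [Function.comp_def, Submodule.coe_sum, Submodule.coe_smul] using h

theorem hsf_TS_is_evaluation_general
    {X : Type*} [NormedAddCommGroup X] [NormedSpace ℝ X]
    (x : ℕ → X) (f : ℕ → X →L[ℝ] ℝ) (hframe : SchauderFrame x f)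
    (S : X →L[ℝ] X →L[ℝ] ℝ) (hS : ∀ n, S (x n) = f n)
    (T : (closedSpan fun n => S (x n)) →L[ℝ] ((closedSpan fun n => S (x n)) →L[ℝ] ℝ))
    (g : ℕ → (closedSpan fun n => S (x n)))
    (hg : ∀ n, (g n : X →L[ℝ] ℝ) = S (x n))
    (hT : ∀ h : (closedSpan fun n => S (x n)),
      Tendsto (fun N => ∑ n ∈ Finset.range N, T (g n) h • g n) atTop (𝓝 h)) :
    ∀ (v : X) (w : (closedSpan fun n => S (x n))), (w : X →L[ℝ] ℝ) = S v →
      ∀ h : (closedSpan fun n => S (x n)), T w h = (h : X →L[ℝ] ℝ) v := by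
  intro v w hw h
  have hgv : ∀ n, (g n : X →L[ℝ] ℝ) v = f n v := fun n => by rw [hg, hS]
  have hw_lim : Tendsto (fun N => ∑ j ∈ Finset.range N, f j v • g j) atTop (𝓝 w) :=
    Submodule.tendsto_sum_smul_of_tendsto_coe <| by
      simpa only [hw, hg] using S.tendsto_sum_smul_map (hframe v)
  have hTw : Tendsto (fun N => ∑ j ∈ Finset.range N, f j v • T (g j) h) atTop (𝓝 (T w h)) :=
    ((ContinuousLinearMap.apply ℝ ℝ h).comp T).tendsto_sum_smul_map hw_lim
  have hhv : Tendsto (fun N => ∑ j ∈ Finset.range N, T (g j) h • f j v) atTop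
      (𝓝 ((h : X →L[ℝ] ℝ) v)) := by
    simpa only [ContinuousLinearMap.comp_apply, Submodule.subtypeL_apply,
      ContinuousLinearMap.apply_apply, hgv] using
      ((ContinuousLinearMap.apply ℝ ℝ v).comp (Submodule.subtypeL _)).tendsto_sum_smul_map (hT h)
  refine tendsto_nhds_unique hTw (hhv.congr fun N => ?_)
  simp only [smul_eq_mul, mul_comm]

/-- Let `{(xₙ, fₙ)}` be a Hilbert-Schauder frame of `X` with HSf-operator `S`, let
`Y` be the norm-closed linear span of `{S xₙ}` in `X*` (with `g : ℕ → Y` the sequence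
`g n = S xₙ` viewed in `Y`), and let `T : Y → Y*` be a bounded operator such that
`{(S xₙ, T(S xₙ))}` is a Schauder frame of `Y`.  Then `(T S x)(f) = f(x)` for all
`x ∈ X` and `f ∈ Y` (here `w ∈ Y` is any element representing `S x`). -/
theorem hsf_TS_is_evaluation
    {X : Type*} [NormedAddCommGroup X] [NormedSpace ℝ X] [CompleteSpace X]
    (x : ℕ → X) (f : ℕ → X →L[ℝ] ℝ) (hframe : SchauderFrame x f)
    (S : X →L[ℝ] X →L[ℝ] ℝ) (hS : ∀ n, S (x n) = f n)
    (T : (closedSpan fun n => S (x n)) →L[ℝ] ((closedSpan fun n => S (x n)) →L[ℝ] ℝ))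
    (g : ℕ → (closedSpan fun n => S (x n)))
    (hg : ∀ n, (g n : X →L[ℝ] ℝ) = S (x n))
    (hT : ∀ h : (closedSpan fun n => S (x n)),
      Tendsto (fun N => ∑ n ∈ Finset.range N, T (g n) h • g n) atTop (𝓝 h)) :
    ∀ (v : X) (w : (closedSpan fun n => S (x n))), (w : X →L[ℝ] ℝ) = S v →
      ∀ h : (closedSpan fun n => S (x n)), T w h = (h : X →L[ℝ] ℝ) v :=
  hsf_TS_is_evaluation_general x f hframe S hS T g hg hT
end
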